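/- Let F : C → Vect_k^f be a k-linear functor with all F(X) finite-dimensional. Then End(F) ≅ Coend(F)* as k-algebras, where Coend(F)* carries the convolution algebra structure dual to the coalgebra structure of Coend(F). Concretely, if {i_X : Hom_k(F(X),F(X)) → Coend(F)} is a realization of Coend(F), then the maps π_X : Coend(F)* → Hom_k(F(X),F(X)) defined by π_X(α) := Σ_{i,j} α(i_X(x^i ⊗ x_j)) (x^j ⊗ x_i) (for a basis {x_i} of F(X) with dual basis {x^i}) make Coend(F)* a realization of End(F), and each π_X is an algebra map. -/

import Mathlib

/- STATEMENT 8: End(F) ≅ Coend(F)* as k-algebras.  Concretely, for a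
realization {i_X} of Coend(F) with its induced coalgebra structure (Δ, ε),
the maps π_X(α) = Σ_{p,q} α(i_X(x^p ⊗ x_q)) (x^q ⊗ x_p) make the dual space
Coend(F)* (with the convolution product) a realization of End(F), and each
π_X is an algebra map (multiplicative and unital) from the convolution algebra
to End_k(F X). -/

open CategoryTheory TensorProduct

noncomputable section
universe w₁ w₂ u
variable (k : Type) [Field k]

def smulRightL {M : Type} [AddCommGroup M] [Module k M] (x : M) :
    (M →ₗ[k] k) →ₗ[k] (M →ₗ[k] M) where
  toFun f := f.smulRight x
  map_add' f g := by ext y; simp [add_smul]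
  map_smul' c f := by ext y; simp [smul_smul]

/-- The comatrix comultiplication on `Hom_k(M,M)` for finite-dimensional `M`:
`Δ(β ⊗ x) = Σ_i (β ⊗ x_i) ⊗ (x^i ⊗ x)`.  The corresponding counit is the
trace. -/
def comatrixComul (M : Type) [AddCommGroup M] [Module k M] [Module.Finite k M] :
    (M →ₗ[k] M) →ₗ[k] ((M →ₗ[k] M) ⊗[k] (M →ₗ[k] M)) :=
  let b := Module.Free.chooseBasis k M
  ∑ i, ∑ l,
    ((TensorProduct.mk k (M →ₗ[k] M) (M →ₗ[k] M)).flip ((b.coord l).smulRight (b i))) ∘ₗ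
      (smulRightL k (b l)) ∘ₗ (LinearMap.llcomp k M M k (b.coord i))

variable (C : Type u) [SmallCategory C] [Preadditive C] [CategoryTheory.Linear k C] [Abelian C]
variable (F : C ⥤ ModuleCat k) [F.Additive] [F.Linear k]

/-- Dinaturality of a family of maps `Hom_k(F X, F X) → U`. -/
def DinatC (U : Type w₁) [AddCommGroup U] [Module k U]
    (i : ∀ X : C, (F.obj X →ₗ[k] F.obj X) →ₗ[k] U) : Prop :=
  ∀ (X Y : C) (f : Y ⟶ X) (S : F.obj X →ₗ[k] F.obj Y),
    i X (((F.map f).hom : F.obj Y →ₗ[k] F.obj X) ∘ₗ S)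
      = i Y (S ∘ₗ ((F.map f).hom : F.obj Y →ₗ[k] F.obj X))

/-- `(U, i)` is a realization of `Coend(F)`: a dinatural family which is
initial among all such. -/
def IsCoendRealization (U : Type w₁) [AddCommGroup U] [Module k U]
    (i : ∀ X : C, (F.obj X →ₗ[k] F.obj X) →ₗ[k] U) : Prop :=
  DinatC k C F U i ∧
  ∀ (V : Type w₂) [AddCommGroup V] [Module k V]
    (j : ∀ X : C, (F.obj X →ₗ[k] F.obj X) →ₗ[k] V), DinatC k C F V j →
    ∃! φ : U →ₗ[k] V, ∀ X : C, φ ∘ₗ i X = j X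

/-- The wedge condition for a candidate end. -/
def DinatEnd (U : Type w₁) [AddCommGroup U] [Module k U]
    (π : ∀ X : C, U →ₗ[k] (F.obj X →ₗ[k] F.obj X)) : Prop :=
  ∀ (X Y : C) (f : X ⟶ Y) (u : U),
    ((F.map f).hom : F.obj X →ₗ[k] F.obj Y) ∘ₗ π X u
      = (π Y u) ∘ₗ ((F.map f).hom : F.obj X →ₗ[k] F.obj Y)

/-- `(U, π)` is a realization of the end `End(F)`. -/
def IsEndRealization (U : Type w₁) [AddCommGroup U] [Module k U]
    (π : ∀ X : C, U →ₗ[k] (F.obj X →ₗ[k] F.obj X)) : Prop :=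
  DinatEnd k C F U π ∧
  ∀ (V : Type w₂) [AddCommGroup V] [Module k V]
    (p : ∀ X : C, V →ₗ[k] (F.obj X →ₗ[k] F.obj X)), DinatEnd k C F V p →
    ∃! φ : V →ₗ[k] U, ∀ X : C, π X ∘ₗ φ = p X

/-- The maps `π_X : Coend(F)* → Hom_k(F X, F X)`,
`π_X(α) = Σ_{p,q} α(i_X(x^p ⊗ x_q)) (x^q ⊗ x_p)`. -/
def coendDualπ (U : Type) [AddCommGroup U] [Module k U]
    (i : ∀ X : C, (F.obj X →ₗ[k] F.obj X) →ₗ[k] U)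
    (X : C) [Module.Finite k (F.obj X)] :
    (U →ₗ[k] k) →ₗ[k] (F.obj X →ₗ[k] F.obj X) :=
  let b := Module.Free.chooseBasis k (F.obj X)
  ∑ p, ∑ q,
    (LinearMap.applyₗ (i X ((b.coord p).smulRight (b q))) :
        (U →ₗ[k] k) →ₗ[k] k).smulRight ((b.coord q).smulRight (b p))

/-- The convolution product on the dual of `U` relative to a comultiplication
`Δ : U → U ⊗ U`. -/
def convMul (U : Type) [AddCommGroup U] [Module k U]
    (Δ : U →ₗ[k] U ⊗[k] U) (α β : U →ₗ[k] k) : U →ₗ[k] k :=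
  (TensorProduct.lid k k).toLinearMap ∘ₗ (TensorProduct.map α β) ∘ₗ Δ


/-! Under the nondegenerate trace pairing `⟨S, T⟩ = tr (S ∘ T)` on `End(F X)`, `π_X α` is the
endomorphism representing the functional `α ∘ i_X`, so every claim becomes an identity of
functionals on `End(F X)`. Dinaturality of `π` follows from that of `i` and cyclicity of the trace.
A wedge `p : V → End(F X)` transposes, through the trace, to a dinatural family
`End(F X) → V*`; its factorization through `Coend(F)` transposes back to the unique factorization
of `p` through `Coend(F)*`. Multiplicativity is the comatrix identity
`(a ⊗ a')(Δ_X S) = a'(S ∘ T)` for `T` representing `a`, and unitality is `ε ∘ i_X = tr`. -/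

section TracePairing

variable {R M N P : Type*} [CommRing R] [AddCommGroup M] [Module R M]
  [AddCommGroup N] [Module R N] [AddCommGroup P] [Module R P]

lemma LinearMap.comp_finsetSum {ι : Type*} (S : N →ₗ[R] P) (s : Finset ι) (f : ι → M →ₗ[R] N) :
    S ∘ₗ ∑ j ∈ s, f j = ∑ j ∈ s, S ∘ₗ f j :=
  map_sum (LinearMap.llcomp R M N P S) f s

lemma LinearMap.smulRight_comp (f : N →ₗ[R] R) (x : M) (T : M →ₗ[R] N) :
    f.smulRight x ∘ₗ T = (f ∘ₗ T).smulRight x := rfl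

lemma LinearMap.comp_smulRight (S : M →ₗ[R] N) (f : N →ₗ[R] R) (x : M) :
    S ∘ₗ f.smulRight x = f.smulRight (S x) := by
  ext; simp

section Basis

variable {ι : Type*} [Fintype ι] (b : Module.Basis ι R M)

lemma Module.Basis.sum_smulRight_coord_comp (S : N →ₗ[R] M) (T : M →ₗ[R] N) :
    ∑ r, (b.coord r ∘ₗ S).smulRight (T (b r)) = T ∘ₗ S := by
  ext y
  simp_rw [LinearMap.sum_apply, LinearMap.smulRight_apply, ← map_smul, ← map_sum]
  simp

lemma Module.Basis.smulRight_eq_sum (f : N →ₗ[R] R) (x : M) :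
    f.smulRight x = ∑ q, b.coord q x • f.smulRight (b q) := by
  ext y
  conv_lhs => rw [LinearMap.smulRight_apply, ← b.sum_repr x, Finset.smul_sum]
  simp [smul_comm (f y)]

variable [Module.Free R M] [Module.Finite R M]

lemma Module.Basis.trace_comp_sum_smulRight (a : Module.Dual R (M →ₗ[R] M)) (S : M →ₗ[R] M) :
    LinearMap.trace R M
        (S ∘ₗ ∑ p, ∑ q, a ((b.coord p).smulRight (b q)) • (b.coord q).smulRight (b p)) =
      a S := by
  conv_rhs => rw [← LinearMap.comp_id S, ← b.sum_smulRight_coord_comp LinearMap.id S]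
  simp_rw [LinearMap.comp_finsetSum, LinearMap.comp_smul, b.smulRight_eq_sum _ (S (b _)),
    map_sum, map_smul, LinearMap.comp_smulRight, LinearMap.trace_smulRight, LinearMap.comp_id,
    smul_eq_mul, mul_comm]

end Basis

lemma LinearMap.ext_of_trace_comp [Module.Free R M] [Module.Finite R M] [Module.Projective R N]
    {T₁ T₂ : M →ₗ[R] N}
    (h : ∀ S : N →ₗ[R] M, trace R M (S ∘ₗ T₁) = trace R M (S ∘ₗ T₂)) : T₁ = T₂ := by
  ext x
  rw [← sub_eq_zero, ← Module.forall_dual_apply_eq_zero_iff R]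
  intro φ
  simpa [LinearMap.smulRight_comp, sub_eq_zero] using h (φ.smulRight x)

end TracePairing

section Comatrix

variable {k} {M : Type} [AddCommGroup M] [Module k M] [Module.Finite k M]

lemma comatrixComul_apply (S : M →ₗ[k] M) :
    let b := Module.Free.chooseBasis k M
    comatrixComul k M S =
      ∑ r, ∑ l, (b.coord r ∘ₗ S).smulRight (b l) ⊗ₜ[k] (b.coord l).smulRight (b r) := by
  simp only [comatrixComul, smulRightL, LinearMap.sum_apply, LinearMap.coe_comp,
    LinearMap.coe_mk, AddHom.coe_mk, Function.comp_apply, LinearMap.flip_apply, mk_apply,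
    LinearMap.llcomp_apply']

lemma lid_map_comatrixComul (a a' : Module.Dual k (M →ₗ[k] M)) {T : M →ₗ[k] M}
    (hT : ∀ S, LinearMap.trace k M (S ∘ₗ T) = a S) (S : M →ₗ[k] M) :
    TensorProduct.lid k k (TensorProduct.map a a' (comatrixComul k M S)) = a' (S ∘ₗ T) := by
  set b := Module.Free.chooseBasis k M
  have hST : S ∘ₗ T =
      ∑ r, ∑ l, a ((b.coord r ∘ₗ S).smulRight (b l)) • (b.coord l).smulRight (b r) := by
    refine LinearMap.ext_of_trace_comp fun T' => ?_
    rw [← LinearMap.comp_assoc, hT, ← b.sum_smulRight_coord_comp S T']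
    simp_rw [LinearMap.comp_finsetSum, LinearMap.comp_smul, b.smulRight_eq_sum _ (T' (b _)),
      map_sum, map_smul, LinearMap.comp_smulRight, LinearMap.trace_smulRight, smul_eq_mul,
      mul_comm]
  rw [comatrixComul_apply, hST]
  simp [b]

end Comatrix

section TraceDual

variable {k C F}
omit [Preadditive C] [CategoryTheory.Linear k C] [Abelian C] [F.Additive] [F.Linear k]

def IsTraceDual (U : Type w₁) [AddCommGroup U] [Module k U]
    (i : ∀ X : C, (F.obj X →ₗ[k] F.obj X) →ₗ[k] U)
    (π : ∀ X : C, (U →ₗ[k] k) →ₗ[k] (F.obj X →ₗ[k] F.obj X)) : Prop :=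
  ∀ (X : C) (α : U →ₗ[k] k) (S : F.obj X →ₗ[k] F.obj X),
    LinearMap.trace k (F.obj X) (S ∘ₗ π X α) = α (i X S)

lemma isTraceDual_coendDualπ (hfd : ∀ X : C, FiniteDimensional k (F.obj X))
    (U : Type) [AddCommGroup U] [Module k U] (i : ∀ X : C, (F.obj X →ₗ[k] F.obj X) →ₗ[k] U) :
    IsTraceDual U i (fun X : C => haveI := hfd X; coendDualπ k C F U i X) := by
  intro X α S
  have := hfd X
  simpa [coendDualπ, LinearMap.sum_apply] using
    (Module.Free.chooseBasis k (F.obj X)).trace_comp_sum_smulRight (α ∘ₗ i X) S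

def tracePairing {V : Type w₂} [AddCommGroup V] [Module k V]
    (p : ∀ X : C, V →ₗ[k] (F.obj X →ₗ[k] F.obj X)) (X : C) :
    (F.obj X →ₗ[k] F.obj X) →ₗ[k] (V →ₗ[k] k) :=
  LinearMap.mk₂ k (fun S v => LinearMap.trace k (F.obj X) (S ∘ₗ p X v))
    (by intros; simp [LinearMap.add_comp]) (by intros; simp [LinearMap.smul_comp])
    (by intros; simp [LinearMap.comp_add]) (by intros; simp [LinearMap.comp_smul])

lemma tracePairing_apply {V : Type w₂} [AddCommGroup V] [Module k V]
    (p : ∀ X : C, V →ₗ[k] (F.obj X →ₗ[k] F.obj X)) (X : C) (S : F.obj X →ₗ[k] F.obj X) (v : V) :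
    tracePairing p X S v = LinearMap.trace k (F.obj X) (S ∘ₗ p X v) := rfl

variable (hfd : ∀ X : C, FiniteDimensional k (F.obj X))
include hfd

lemma dinatC_tracePairing {V : Type w₂} [AddCommGroup V] [Module k V]
    {p : ∀ X : C, V →ₗ[k] (F.obj X →ₗ[k] F.obj X)} (hp : DinatEnd k C F V p) :
    DinatC k C F (V →ₗ[k] k) (tracePairing p) := by
  intro X Y f S
  have := hfd X; have := hfd Y
  set Ff : F.obj Y →ₗ[k] F.obj X := (F.map f).hom
  ext v
  calc LinearMap.trace k (F.obj X) ((Ff ∘ₗ S) ∘ₗ p X v)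
      = LinearMap.trace k (F.obj Y) (S ∘ₗ p X v ∘ₗ Ff) := by
        rw [LinearMap.comp_assoc, LinearMap.trace_comp_comm', LinearMap.comp_assoc]
    _ = LinearMap.trace k (F.obj Y) ((S ∘ₗ Ff) ∘ₗ p Y v) := by
        rw [← hp, LinearMap.comp_assoc]

section Realization

variable {U : Type w₁} [AddCommGroup U] [Module k U]
  {i : ∀ X : C, (F.obj X →ₗ[k] F.obj X) →ₗ[k] U}
  {π : ∀ X : C, (U →ₗ[k] k) →ₗ[k] (F.obj X →ₗ[k] F.obj X)}

lemma IsTraceDual.apply_eq_iff (hπ : IsTraceDual U i π) {X : C} (α : U →ₗ[k] k)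
    (T : F.obj X →ₗ[k] F.obj X) :
    π X α = T ↔ ∀ S, α (i X S) = LinearMap.trace k (F.obj X) (S ∘ₗ T) := by
  have := hfd X
  refine ⟨fun h S => by rw [← hπ, h], fun h => LinearMap.ext_of_trace_comp fun S => ?_⟩
  rw [hπ, h]

lemma IsTraceDual.dinatEnd (hπ : IsTraceDual U i π) (hdin : DinatC k C F U i) :
    DinatEnd k C F (U →ₗ[k] k) π := by
  intro X Y f α
  have := hfd X; have := hfd Y
  set Ff : F.obj X →ₗ[k] F.obj Y := (F.map f).hom
  refine LinearMap.ext_of_trace_comp fun S => ?_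
  calc LinearMap.trace k (F.obj X) (S ∘ₗ Ff ∘ₗ π X α)
      = α (i X (S ∘ₗ Ff)) := by rw [← LinearMap.comp_assoc, hπ]
    _ = α (i Y (Ff ∘ₗ S)) := by rw [hdin]
    _ = LinearMap.trace k (F.obj Y) (Ff ∘ₗ S ∘ₗ π Y α) := by rw [← hπ, LinearMap.comp_assoc]
    _ = LinearMap.trace k (F.obj X) (S ∘ₗ π Y α ∘ₗ Ff) := by
        rw [← LinearMap.trace_comp_comm', LinearMap.comp_assoc]

lemma IsTraceDual.isEndRealization (hπ : IsTraceDual U i π)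
    (hreal : IsCoendRealization.{w₁, w₂} k C F U i) :
    IsEndRealization.{w₁, w₂} k C F (U →ₗ[k] k) π := by
  refine ⟨hπ.dinatEnd hfd hreal.1, fun V _ _ p hp => ?_⟩
  obtain ⟨φ, hφ, hφ_unique⟩ :=
    hreal.2 (V →ₗ[k] k) (tracePairing p) (dinatC_tracePairing hfd hp)
  have factors_iff : ∀ ψ : V →ₗ[k] U →ₗ[k] k,
      (∀ X, π X ∘ₗ ψ = p X) ↔ ∀ X, ψ.flip ∘ₗ i X = tracePairing p X := by
    intro ψ
    refine forall_congr' fun X => ?_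
    simp only [LinearMap.ext_iff, LinearMap.comp_apply, hπ.apply_eq_iff hfd,
      LinearMap.flip_apply, tracePairing_apply]
    exact forall_comm
  refine ⟨φ.flip, (factors_iff _).2 hφ, fun ψ hψ => ?_⟩
  rw [← hφ_unique ψ.flip ((factors_iff ψ).1 hψ), LinearMap.flip_flip]

end Realization

section Algebra

variable {U : Type} [AddCommGroup U] [Module k U]
  {i : ∀ X : C, (F.obj X →ₗ[k] F.obj X) →ₗ[k] U}
  {π : ∀ X : C, (U →ₗ[k] k) →ₗ[k] (F.obj X →ₗ[k] F.obj X)}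

lemma IsTraceDual.map_convMul (hπ : IsTraceDual U i π) {Δ : U →ₗ[k] U ⊗[k] U}
    (hΔ : ∀ X : C, haveI := hfd X;
      Δ ∘ₗ i X = (TensorProduct.map (i X) (i X)) ∘ₗ comatrixComul k (F.obj X))
    (X : C) (α β : U →ₗ[k] k) :
    π X (convMul k U Δ α β) = π X α ∘ₗ π X β := by
  have := hfd X
  refine (hπ.apply_eq_iff hfd _ _).2 fun S => ?_
  calc convMul k U Δ α β (i X S)
      = TensorProduct.lid k k
          (TensorProduct.map (α ∘ₗ i X) (β ∘ₗ i X) (comatrixComul k (F.obj X) S)) := by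
        simp [convMul, ← LinearMap.comp_apply (g := i X), hΔ, TensorProduct.map_comp]
    _ = β (i X (S ∘ₗ π X α)) := lid_map_comatrixComul _ _ (hπ X α) S
    _ = LinearMap.trace k (F.obj X) (S ∘ₗ π X α ∘ₗ π X β) := by
        rw [← LinearMap.comp_assoc, hπ]

lemma IsTraceDual.map_counit (hπ : IsTraceDual U i π) {ε : U →ₗ[k] k}
    (hε : ∀ X : C, ε ∘ₗ i X = LinearMap.trace k (F.obj X)) (X : C) :
    π X ε = LinearMap.id :=
  (hπ.apply_eq_iff hfd _ _).2 fun S => by rw [LinearMap.comp_id, ← hε, LinearMap.comp_apply]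

end Algebra

end TraceDual

theorem end_iso_dual_of_coend
    (hfd : ∀ X : C, FiniteDimensional k (F.obj X))
    (U : Type) [AddCommGroup U] [Module k U]
    (i : ∀ X : C, (F.obj X →ₗ[k] F.obj X) →ₗ[k] U)
    (hreal : IsCoendRealization.{0, 0} k C F U i)
    (Δ : U →ₗ[k] U ⊗[k] U) (ε : U →ₗ[k] k)
    (hΔ : ∀ X : C, haveI := hfd X;
      Δ ∘ₗ i X = (TensorProduct.map (i X) (i X)) ∘ₗ comatrixComul k (F.obj X))
    (hε : ∀ X : C, ε ∘ₗ i X = LinearMap.trace k (F.obj X)) :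
    -- Coend(F)* with the maps π_X is a realization of End(F):
    IsEndRealization.{0, 0} k C F (U →ₗ[k] k)
      (fun X : C => haveI := hfd X; coendDualπ k C F U i X) ∧
    -- and each π_X is an algebra map from the convolution algebra Coend(F)*:
    (∀ X : C, haveI := hfd X;
      (∀ α β : U →ₗ[k] k,
        coendDualπ k C F U i X (convMul k U Δ α β)
          = (coendDualπ k C F U i X α) ∘ₗ (coendDualπ k C F U i X β)) ∧
      coendDualπ k C F U i X ε = LinearMap.id) := by
  have hπ := isTraceDual_coendDualπ hfd U i
  exact ⟨hπ.isEndRealization hfd hreal,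
    fun X => ⟨hπ.map_convMul hfd hΔ X, hπ.map_counit hfd hε X⟩⟩
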